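/- Let R be a commutative semilocal ring (or more generally suppose SL(n,R) admits a Gauss decomposition SL(n,R) = U·T·U⁻·U with T the diagonal torus). Then SL(n,R) = U(n,R)·U⁻(n,R)·U(n,R)·U⁻(n,R)·U(n,R), a unitriangular factorisation of length 5. -/

import Mathlib

/-- Upper unitriangular square matrix. -/
def IsUpperUnitriangular {n : ℕ} {R : Type*} [CommRing R]
    (M : Matrix (Fin n) (Fin n) R) : Prop :=
  (∀ i, M i i = 1) ∧ ∀ i j : Fin n, j < i → M i j = 0

/-- Lower unitriangular square matrix. -/
def IsLowerUnitriangular {n : ℕ} {R : Type*} [CommRing R]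
    (M : Matrix (Fin n) (Fin n) R) : Prop :=
  (∀ i, M i i = 1) ∧ ∀ i j : Fin n, i < j → M i j = 0

/-!
Substituting the Gauss decomposition `g = u · d · v · w`, it suffices to write every diagonal
matrix `d = diag(t₀, …, tₙ₋₁)` of determinant one as `U · L⁻ · U · L⁻`, the outer factors
being absorbed by `u` and `v`. With `qᵢ = t₀ ⋯ tᵢ₋₁` and `cᵢ = 1 - qᵢ` (so `c₀ = 0`), the
tridiagonal matrix with subdiagonal `tᵢ`, superdiagonal `cᵢ` and diagonal `1 + tᵢ cᵢ` is
`(1 + L)(1 + U)` for the bidiagonal matrices `L`, `U` carrying these off-diagonals, and it is also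
`(1 + U') · d · (1 + S)`, where `S` is the subdiagonal of ones and `U'` has superdiagonal
`cᵢ tᵢ⁻¹`; the last diagonal entry matches because `qₙ = det d = 1`.
-/

open Matrix Ring

namespace Matrix

theorem IsUpperTriangular.mul_apply_self {m R : Type*} [Fintype m] [LinearOrder m]
    [NonUnitalNonAssocSemiring R] {A B : Matrix m m R} (hA : A.IsUpperTriangular)
    (hB : B.IsUpperTriangular) (i : m) : (A * B) i i = A i i * B i i := by
  rw [mul_apply]
  refine Finset.sum_eq_single i (fun k _ hk => ?_) (by simp)
  rcases hk.lt_or_gt with hki | hik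
  · rw [hA hki, zero_mul]
  · rw [hB hik, mul_zero]

end Matrix

theorem Fin.partialProd_last {n : ℕ} {M : Type*} [CommMonoid M] (f : Fin n → M) :
    Fin.partialProd f (Fin.last n) = ∏ i, f i := by
  simp [Fin.partialProd, List.take_of_length_le, List.prod_ofFn]

theorem isUnit_of_prod_eq_one {ι M : Type*} [Fintype ι] [CommMonoid M] {t : ι → M}
    (ht : ∏ i, t i = 1) (i : ι) : IsUnit (t i) :=
  isUnit_of_dvd_one (ht ▸ Finset.dvd_prod_of_mem t (Finset.mem_univ i))

section

variable {n : ℕ} {R : Type*} [CommRing R]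

namespace IsUpperUnitriangular

variable {A B : Matrix (Fin n) (Fin n) R}

theorem isUpperTriangular (hA : IsUpperUnitriangular A) : A.IsUpperTriangular :=
  fun i j hij => hA.2 i j hij

theorem transpose (hA : IsUpperUnitriangular A) : IsLowerUnitriangular Aᵀ :=
  ⟨hA.1, fun i j hij => hA.2 j i hij⟩

theorem mul (hA : IsUpperUnitriangular A) (hB : IsUpperUnitriangular B) :
    IsUpperUnitriangular (A * B) :=
  ⟨fun i => by rw [hA.isUpperTriangular.mul_apply_self hB.isUpperTriangular, hA.1, hB.1, one_mul],
    fun _ _ hij => hA.isUpperTriangular.mul hB.isUpperTriangular hij⟩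

theorem isUnit_det (hA : IsUpperUnitriangular A) : IsUnit A.det := by
  rw [det_of_isUpperTriangular hA.isUpperTriangular, Finset.prod_eq_one fun i _ => hA.1 i]
  exact isUnit_one

theorem inv (hA : IsUpperUnitriangular A) : IsUpperUnitriangular A⁻¹ := by
  have := A.invertibleOfIsUnitDet hA.isUnit_det
  have hinv : A⁻¹.IsUpperTriangular := blockTriangular_inv_of_blockTriangular hA.isUpperTriangular
  refine ⟨fun i => ?_, fun _ _ hij => hinv hij⟩
  have := congrFun₂ (mul_nonsing_inv A hA.isUnit_det) i i
  rwa [hA.isUpperTriangular.mul_apply_self hinv, hA.1, one_mul, one_apply_eq] at this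

end IsUpperUnitriangular

namespace IsLowerUnitriangular

variable {A B : Matrix (Fin n) (Fin n) R}

theorem transpose (hA : IsLowerUnitriangular A) : IsUpperUnitriangular Aᵀ :=
  ⟨hA.1, fun i j hij => hA.2 j i hij⟩

theorem mul (hA : IsLowerUnitriangular A) (hB : IsLowerUnitriangular B) :
    IsLowerUnitriangular (A * B) := by
  simpa [transpose_mul] using (hB.transpose.mul hA.transpose).transpose

theorem isUnit_det (hA : IsLowerUnitriangular A) : IsUnit A.det :=
  det_transpose A ▸ hA.transpose.isUnit_det

theorem inv (hA : IsLowerUnitriangular A) : IsLowerUnitriangular A⁻¹ := by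
  simpa [transpose_nonsing_inv] using hA.transpose.inv.transpose

end IsLowerUnitriangular

/-- Off-diagonal entries are indexed by the larger of the two indices, here and in `subdiag`:
the entry at `(i, i + 1)` is `a (i + 1)`, and `a 0` plays no role. -/
def superdiag (a : Fin n → R) : Matrix (Fin n) (Fin n) R :=
  of fun i j => if (i : ℕ) + 1 = j then a j else 0

def subdiag (b : Fin n → R) : Matrix (Fin n) (Fin n) R :=
  of fun i j => if (i : ℕ) = j + 1 then b i else 0

theorem isUpperUnitriangular_one_add_superdiag (a : Fin n → R) :
    IsUpperUnitriangular (1 + superdiag a) := by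
  refine ⟨fun i => by simp [superdiag], fun i j hij => ?_⟩
  have : (i : ℕ) + 1 ≠ j := by omega
  simp [superdiag, this, hij.ne']

theorem isLowerUnitriangular_one_add_subdiag (b : Fin n → R) :
    IsLowerUnitriangular (1 + subdiag b) := by
  refine ⟨fun i => by simp [subdiag], fun i j hij => ?_⟩
  have : (i : ℕ) ≠ j + 1 := by omega
  simp [subdiag, this, hij.ne]

theorem superdiag_mul_diagonal (a d : Fin n → R) :
    superdiag a * diagonal d = superdiag (a * d) := by
  ext i j
  simp [superdiag, apply_ite (· * d j)]

theorem diagonal_mul_subdiag (d b : Fin n → R) :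
    diagonal d * subdiag b = subdiag (d * b) := by
  ext i j
  simp [subdiag, mul_ite]

theorem subdiag_mul_superdiag (b a : Fin n → R) :
    subdiag b * superdiag a = diagonal fun i : Fin n => if (i : ℕ) = 0 then 0 else b i * a i := by
  ext i j
  rw [mul_apply, diagonal_apply]
  by_cases hi : (i : ℕ) = 0
  · refine (Finset.sum_eq_zero fun k _ => ?_).trans (by simp [hi])
    simp [subdiag, show (i : ℕ) ≠ k + 1 by omega]
  · rw [Finset.sum_eq_single ⟨i - 1, by omega⟩]
    · by_cases hij : i = j
      · subst hij
        simp [subdiag, superdiag, hi, show (i : ℕ) - 1 + 1 = i by omega]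
      · simp [subdiag, superdiag, hij, Fin.val_ne_of_ne hij, show (i : ℕ) - 1 + 1 = i by omega]
    · intro k _ hk
      simp only [ne_eq, Fin.ext_iff, subdiag, of_apply, ite_mul, zero_mul,
        ite_eq_right_iff] at hk ⊢
      omega
    · simp

theorem superdiag_mul_subdiag (a b : Fin n → R) :
    superdiag a * subdiag b =
      diagonal fun i : Fin n => if h : (i : ℕ) + 1 < n then a ⟨i + 1, h⟩ * b ⟨i + 1, h⟩ else 0 := by
  ext i j
  rw [mul_apply, diagonal_apply]
  by_cases hi : (i : ℕ) + 1 < n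
  · rw [Finset.sum_eq_single ⟨i + 1, hi⟩]
    · by_cases hij : i = j
      · subst hij
        simp [subdiag, superdiag, hi]
      · simp [subdiag, superdiag, hij, Fin.val_ne_of_ne hij]
    · intro k _ hk
      simp only [ne_eq, Fin.ext_iff, superdiag, of_apply, ite_mul, zero_mul,
        ite_eq_right_iff] at hk ⊢
      omega
    · simp
  · refine (Finset.sum_eq_zero fun k _ => ?_).trans (by simp [hi])
    simp [superdiag, show (i : ℕ) + 1 ≠ k by omega]

theorem one_add_superdiag_mul_diagonal_mul_one_add_subdiag {t : Fin n → R} (ht : ∏ i, t i = 1) :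
    let c : Fin n → R := 1 - Fin.partialProd t ∘ Fin.castSucc
    (1 + superdiag (c * fun i => (t i)⁻¹ʳ)) * diagonal t * (1 + subdiag 1) =
      (1 + subdiag t) * (1 + superdiag c) := by
  intro c
  have hc : (c * fun i => (t i)⁻¹ʳ) * t = c :=
    funext fun i => Ring.inverse_mul_cancel_right _ _ (isUnit_of_prod_eq_one ht i)
  have hsucc (i : Fin n) : (if h : (i : ℕ) + 1 < n then c ⟨i + 1, h⟩ * (1 : Fin n → R) ⟨i + 1, h⟩
      else 0) = 1 - Fin.partialProd t i.succ := by
    split_ifs with h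
    · simp [c, Fin.castSucc, Fin.succ, Fin.castAdd, Fin.castLE]
    · have : i.succ = Fin.last n := Fin.ext (by simp; omega)
      rw [this, Fin.partialProd_last, ht, sub_self]
  have hzero (i : Fin n) : (if (i : ℕ) = 0 then 0 else t i * c i) = t i * c i := by
    split_ifs with h
    · simp [c, show i.castSucc = 0 from Fin.ext h]
    · rfl
  have hdiag : diagonal t + superdiag c * subdiag 1 = 1 + subdiag t * superdiag c := by
    rw [superdiag_mul_subdiag, subdiag_mul_superdiag, ← diagonal_one, diagonal_add, diagonal_add]
    congr 1
    funext i
    rw [hsucc, hzero, Fin.partialProd_succ]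
    simp only [c, Pi.sub_apply, Pi.one_apply, Function.comp_apply]
    ring
  calc (1 + superdiag (c * fun i => (t i)⁻¹ʳ)) * diagonal t * (1 + subdiag 1)
      = diagonal t + superdiag c * subdiag 1 + diagonal t * subdiag 1 + superdiag c := by
        rw [add_mul, one_mul, superdiag_mul_diagonal, hc]
        noncomm_ring
    _ = 1 + subdiag t * superdiag c + subdiag t + superdiag c := by
        rw [hdiag, diagonal_mul_subdiag, mul_one]
    _ = (1 + subdiag t) * (1 + superdiag c) := by noncomm_ring

theorem exists_diagonal_eq_upper_mul_lower_mul_upper_mul_lower {t : Fin n → R}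
    (ht : (diagonal t).det = 1) :
    ∃ u₁ l₁ u₂ l₂ : Matrix (Fin n) (Fin n) R,
      IsUpperUnitriangular u₁ ∧ IsLowerUnitriangular l₁ ∧
      IsUpperUnitriangular u₂ ∧ IsLowerUnitriangular l₂ ∧ diagonal t = u₁ * l₁ * u₂ * l₂ := by
  rw [det_diagonal] at ht
  have key := one_add_superdiag_mul_diagonal_mul_one_add_subdiag ht
  set c : Fin n → R := 1 - Fin.partialProd t ∘ Fin.castSucc
  set A := 1 + superdiag (c * fun i => (t i)⁻¹ʳ)
  set B : Matrix (Fin n) (Fin n) R := 1 + subdiag 1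
  have hA : IsUpperUnitriangular A := isUpperUnitriangular_one_add_superdiag _
  have hB : IsLowerUnitriangular B := isLowerUnitriangular_one_add_subdiag _
  refine ⟨A⁻¹, 1 + subdiag t, 1 + superdiag c, B⁻¹, hA.inv,
    isLowerUnitriangular_one_add_subdiag t, isUpperUnitriangular_one_add_superdiag c, hB.inv, ?_⟩
  calc diagonal t = A⁻¹ * (A * diagonal t * B) * B⁻¹ := by
        simp only [← mul_assoc, nonsing_inv_mul A hA.isUnit_det, one_mul]
        rw [mul_assoc, mul_nonsing_inv B hB.isUnit_det, mul_one]
    _ = A⁻¹ * (1 + subdiag t) * (1 + superdiag c) * B⁻¹ := by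
        rw [key]
        simp only [mul_assoc]

end

/-- If `SL(n,R)` admits a Gauss decomposition `U·T·U⁻·U`, then
it admits a unitriangular factorisation `U·U⁻·U·U⁻·U` of length 5. -/
theorem sl_five_factors_of_gauss (n : ℕ) (R : Type*) [CommRing R]
    (hGauss : ∀ g : Matrix (Fin n) (Fin n) R, g.det = 1 →
      ∃ (u : Matrix (Fin n) (Fin n) R) (d : Fin n → R) (v w : Matrix (Fin n) (Fin n) R),
        IsUpperUnitriangular u ∧ (Matrix.diagonal d).det = 1 ∧
        IsLowerUnitriangular v ∧ IsUpperUnitriangular w ∧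
        g = u * Matrix.diagonal d * v * w) :
    ∀ g : Matrix (Fin n) (Fin n) R, g.det = 1 →
      ∃ u₁ l₁ u₂ l₂ u₃ : Matrix (Fin n) (Fin n) R,
        IsUpperUnitriangular u₁ ∧ IsLowerUnitriangular l₁ ∧
        IsUpperUnitriangular u₂ ∧ IsLowerUnitriangular l₂ ∧
        IsUpperUnitriangular u₃ ∧ g = u₁ * l₁ * u₂ * l₂ * u₃ := by
  intro g hg
  obtain ⟨u, d, v, w, hu, hd, hv, hw, rfl⟩ := hGauss g hg
  obtain ⟨u₁, l₁, u₂, l₂, hu₁, hl₁, hu₂, hl₂, hdiag⟩ :=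
    exists_diagonal_eq_upper_mul_lower_mul_upper_mul_lower hd
  refine ⟨u * u₁, l₁, u₂, l₂ * v, w, hu.mul hu₁, hl₁, hu₂, hl₂.mul hv, hw, ?_⟩
  rw [hdiag]
  simp only [mul_assoc]
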